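/- arXiv:1907.09826 — 2 statements merged into one kernel-verified Lean document; each statement's English description precedes it below -/
import Mathlib

section
/- Let F be a strongly convex Minkowski norm on ℝ^m. Then the map v ↦ D(F²)(v) (the Fréchet derivative of F², extended by the value 0 at v = 0) is Lipschitz continuous from ℝ^m to the dual space (ℝ^m)^*. -/
open scoped Topology Classical
open MeasureTheory
noncomputable section

/-- One half of the second Fréchet derivative of `F²` at `v`, evaluated on `(w₁, w₂)`:
the fundamental tensor of `F`. -/
def fundTensor {V : Type*} [NormedAddCommGroup V] [NormedSpace ℝ V]
    (F : V → ℝ) (v w₁ w₂ : V) : ℝ :=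
  (1 / 2) * fderiv ℝ (fderiv ℝ (fun u => (F u) ^ 2)) v w₁ w₂

/-- A strongly convex Minkowski norm on a real normed space. -/
structure IsMinkowskiNorm {V : Type*} [NormedAddCommGroup V] [NormedSpace ℝ V]
    (F : V → ℝ) : Prop where
  continuous : Continuous F
  map_zero : F 0 = 0
  pos : ∀ v : V, v ≠ 0 → 0 < F v
  homog : ∀ lam : ℝ, 0 < lam → ∀ v : V, F (lam • v) = lam * F v
  smooth : ContDiffOn ℝ 2 F {0}ᶜ
  symm : ∀ v : V, v ≠ 0 → ∀ w₁ w₂ : V, fundTensor F v w₁ w₂ = fundTensor F v w₂ w₁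
  posdef : ∀ v : V, v ≠ 0 → ∀ w : V, w ≠ 0 → 0 < fundTensor F v w w

/-- The Legendre map of `F`: `ℓ(v) = (1/2) D(F²)(v)` for `v ≠ 0`, and `ℓ(0) = 0`. -/
def legendre {V : Type*} [NormedAddCommGroup V] [NormedSpace ℝ V]
    (F : V → ℝ) (v : V) : V →L[ℝ] ℝ :=
  if v = 0 then 0 else (1 / 2 : ℝ) • fderiv ℝ (fun u => (F u) ^ 2) v

/-- The dual co-Finsler norm `F^*(ω) = sup {ω v : F v = 1}`. -/
def dualNorm {V : Type*} [NormedAddCommGroup V] [NormedSpace ℝ V]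
    (F : V → ℝ) (ω : V →L[ℝ] ℝ) : ℝ :=
  sSup ((fun v => ω v) '' {v | F v = 1})

/-!
`F²` is positively homogeneous of degree 2, so its derivative `g` is homogeneous of degree 1 and
the derivative of `g` is homogeneous of degree 0 on `ℝ^m ∖ {0}`. Being continuous there, the latter
is bounded by its maximum on the compact unit sphere. The mean value inequality then makes `g`
Lipschitz on every segment that avoids the origin; a segment through the origin is split there,
using `‖g v‖ ≤ C ‖v‖`, which is the mean value inequality on the segment from `v` to `2 v`.
-/

open Set Metric

variable {E G : Type*} [NormedAddCommGroup E] [NormedSpace ℝ E] [NormedAddCommGroup G]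

theorem lipschitzWith_of_norm_le_mul_norm {g : E → G} {C : NNReal}
    (hseg : ∀ v w : E, (0 : E) ∉ segment ℝ v w → ‖g v - g w‖ ≤ C * ‖v - w‖)
    (hlin : ∀ v : E, ‖g v‖ ≤ C * ‖v‖) : LipschitzWith C g := by
  refine LipschitzWith.of_dist_le_mul fun v w => ?_
  rw [dist_eq_norm, dist_eq_norm]
  by_cases h0 : (0 : E) ∈ segment ℝ v w
  · have hsplit : ‖v‖ + ‖w‖ = ‖v - w‖ := by
      simpa [dist_eq_norm] using dist_add_dist_of_mem_segment h0
    calc ‖g v - g w‖ ≤ ‖g v‖ + ‖g w‖ := norm_sub_le _ _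
      _ ≤ C * ‖v‖ + C * ‖w‖ := add_le_add (hlin v) (hlin w)
      _ = C * ‖v - w‖ := by rw [← mul_add, hsplit]
  · exact hseg v w h0

variable [NormedSpace ℝ G]

def IsPosHomogeneous (k : ℕ) (f : E → G) : Prop :=
  ∀ c : ℝ, 0 < c → ∀ v : E, v ≠ 0 → f (c • v) = c ^ k • f v

namespace IsPosHomogeneous

theorem fderiv {k : ℕ} {f : E → G} (hf : IsPosHomogeneous (k + 1) f) :
    IsPosHomogeneous k (_root_.fderiv ℝ f) := by
  intro c hc v hv
  have hscaled : (fun u => f (c • u)) =ᶠ[𝓝 v] (c ^ (k + 1) • f) := by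
    filter_upwards [isOpen_compl_singleton.mem_nhds hv] with u hu
    exact hf c hc u hu
  have h := hscaled.fderiv_eq (𝕜 := ℝ)
  rw [_root_.fderiv_comp_smul, fderiv_const_smul_field, pow_succ', mul_smul] at h
  exact smul_right_injective _ hc.ne' h

theorem exists_norm_le [ProperSpace E] {f : E → G} (hf : IsPosHomogeneous 0 f)
    (hcont : ContinuousOn f {0}ᶜ) : ∃ C, ∀ v : E, v ≠ 0 → ‖f v‖ ≤ C := by
  have hsphere : sphere (0 : E) 1 ⊆ {0}ᶜ := fun v hv => ne_zero_of_mem_sphere one_ne_zero ⟨v, hv⟩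
  obtain ⟨C, hC⟩ := (isCompact_sphere (0 : E) 1).exists_bound_of_continuousOn (hcont.mono hsphere)
  refine ⟨C, fun v hv => ?_⟩
  have hnv : 0 < ‖v‖ := norm_pos_iff.mpr hv
  have hunit : ‖v‖⁻¹ • v ∈ sphere (0 : E) 1 := by
    simpa using norm_smul_inv_norm (𝕜 := ℝ) hv
  calc ‖f v‖ = ‖f (‖v‖⁻¹ • v)‖ := by
        rw [hf _ (inv_pos.mpr hnv) v hv, pow_zero, one_smul]
    _ ≤ C := hC _ hunit

theorem norm_le_mul_norm {g : E → G} {C : ℝ} (hg : IsPosHomogeneous 1 g)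
    (hseg : ∀ v w : E, (0 : E) ∉ segment ℝ v w → ‖g v - g w‖ ≤ C * ‖v - w‖)
    {v : E} (hv : v ≠ 0) : ‖g v‖ ≤ C * ‖v‖ := by
  have h0 : (0 : E) ∉ segment ℝ ((2 : ℝ) • v) v := by
    rw [segment_eq_image_lineMap]
    rintro ⟨t, ⟨ht0, ht1⟩, ht⟩
    have : (2 - t) • v = 0 := by
      rw [← ht, AffineMap.lineMap_apply_module]
      module
    exact hv ((smul_eq_zero.mp this).resolve_left (by linarith))
  have h := hseg _ _ h0
  rwa [hg 2 two_pos v hv, pow_one, two_smul, two_smul, add_sub_cancel_right,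
    add_sub_cancel_right] at h

end IsPosHomogeneous

theorem norm_sub_le_of_zero_notMem_segment {g : E → G} {C : ℝ}
    (hd : ∀ v : E, v ≠ 0 → DifferentiableAt ℝ g v) (hC : ∀ v : E, v ≠ 0 → ‖fderiv ℝ g v‖ ≤ C)
    {v w : E} (h0 : (0 : E) ∉ segment ℝ v w) : ‖g v - g w‖ ≤ C * ‖v - w‖ := by
  have hsub : segment ℝ w v ⊆ {0}ᶜ := fun x hx hx0 => h0 (by
    rw [segment_symm]; exact mem_singleton_iff.mp hx0 ▸ hx)
  exact (convex_segment w v).norm_image_sub_le_of_norm_fderiv_le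
    (fun x hx => hd x (hsub hx)) (fun x hx => hC x (hsub hx))
    (left_mem_segment ℝ w v) (right_mem_segment ℝ w v)

theorem IsPosHomogeneous.lipschitzWith_extend_zero [DecidableEq E] {g : E → G} {C : NNReal}
    (hg : IsPosHomogeneous 1 g) (hd : ∀ v : E, v ≠ 0 → DifferentiableAt ℝ g v)
    (hC : ∀ v : E, v ≠ 0 → ‖_root_.fderiv ℝ g v‖ ≤ C) :
    LipschitzWith C (fun v => if v = 0 then 0 else g v) := by
  have hseg := fun v w => norm_sub_le_of_zero_notMem_segment (v := v) (w := w) hd hC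
  refine lipschitzWith_of_norm_le_mul_norm (fun v w h0 => ?_) (fun v => ?_)
  · have hv : v ≠ 0 := fun hv => h0 (hv ▸ left_mem_segment ℝ v w)
    have hw : w ≠ 0 := fun hw => h0 (hw ▸ right_mem_segment ℝ v w)
    simpa [hv, hw] using hseg v w h0
  · by_cases hv : v = 0
    · simp [hv]
    · simpa [hv] using hg.norm_le_mul_norm hseg hv

theorem IsMinkowskiNorm.isPosHomogeneous_sq {F : E → ℝ} (hF : IsMinkowskiNorm F) :
    IsPosHomogeneous 2 (fun u => F u ^ 2) := by
  intro c hc v _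
  simp [hF.homog c hc v, mul_pow]

theorem fderiv_sq_minkowski_lipschitz_general
    {m : ℕ} (F : EuclideanSpace ℝ (Fin m) → ℝ)
    (hF : IsMinkowskiNorm F) :
    ∃ K : NNReal, LipschitzWith K
      (fun v : EuclideanSpace ℝ (Fin m) =>
        if v = 0 then (0 : EuclideanSpace ℝ (Fin m) →L[ℝ] ℝ)
        else fderiv ℝ (fun u => (F u) ^ 2) v) := by
  set g := fderiv ℝ (fun u => F u ^ 2)
  have hopen : IsOpen ({0}ᶜ : Set (EuclideanSpace ℝ (Fin m))) := isOpen_compl_singleton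
  have hg : ContDiffOn ℝ 1 g {0}ᶜ := (hF.smooth.pow 2).fderiv_of_isOpen hopen le_rfl
  have hg_diff : ∀ v, v ≠ 0 → DifferentiableAt ℝ g v := fun v hv =>
    (hg.contDiffAt (hopen.mem_nhds hv)).differentiableAt one_ne_zero
  have hg_hom : IsPosHomogeneous 1 g := hF.isPosHomogeneous_sq.fderiv
  obtain ⟨C, hC⟩ := hg_hom.fderiv.exists_norm_le
    (hg.fderiv_of_isOpen hopen (m := 0) (by norm_num)).continuousOn
  exact ⟨C.toNNReal, hg_hom.lipschitzWith_extend_zero hg_diff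
    fun v hv => (hC v hv).trans (le_max_left _ _)⟩

/-- For a strongly convex Minkowski norm `F` on `ℝ^m`, the map
`v ↦ D(F²)(v)` (extended by `0` at `v = 0`) is Lipschitz from `ℝ^m` to the dual space. -/
theorem fderiv_sq_minkowski_lipschitz
    {m : ℕ} (hm : 2 ≤ m) (F : EuclideanSpace ℝ (Fin m) → ℝ)
    (hF : IsMinkowskiNorm F) :
    ∃ K : NNReal, LipschitzWith K
      (fun v : EuclideanSpace ℝ (Fin m) =>
        if v = 0 then (0 : EuclideanSpace ℝ (Fin m) →L[ℝ] ℝ)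
        else fderiv ℝ (fun u => (F u) ^ 2) v) :=
  fderiv_sq_minkowski_lipschitz_general F hF
end
end

section
/- Let k ≥ 2 and let F be a strongly convex Minkowski norm on ℝ^m which is of class C^{k+1} on ℝ^m ∖ {0}. Then its dual co-Finsler norm F^* is of class C^k on (ℝ^m)^* ∖ {0}. -/
/-!
The Legendre map `ℓ u = ½ D(F²)(u)` is `C^k` away from the origin, and its derivative at `u` is the
fundamental tensor `g_u`, an isomorphism `V ≃ V*` by positive definiteness. Strict convexity of
`F²` along segments (its second derivative is `2 g`) gives `ℓ u v ≤ F u` on the unit sphere `F = 1`,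
with equality at `v = u / F u`; hence `F* (ℓ u) = F u`. Minimising the coercive function `F² - 2 ω`
shows that every `ω ≠ 0` is some `ℓ u`. By the inverse function theorem `F* = F ∘ ℓ⁻¹` near `ω`,
which is `C^k`.
-/

open scoped Topology Classical
open MeasureTheory
noncomputable section

open Set Filter

theorem lt_slope_of_hasDerivAt_of_deriv2_pos {φ φ' φ'' : ℝ → ℝ} {a b : ℝ} (hab : a < b)
    (hφ : ∀ t ∈ Icc a b, HasDerivAt φ (φ' t) t) (hφ' : ∀ t ∈ Ioo a b, HasDerivAt φ' (φ'' t) t)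
    (hφ'' : ∀ t ∈ Ioo a b, 0 < φ'' t) : φ' a < slope φ a b := by
  have hmono : StrictMonoOn φ' (Ioo a b) :=
    strictMonoOn_of_deriv_pos (convex_Ioo a b)
      (fun t ht => (hφ' t ht).continuousAt.continuousWithinAt)
      (fun t ht => by rw [interior_Ioo] at ht; rw [(hφ' t ht).deriv]; exact hφ'' t ht)
  have hconv : StrictConvexOn ℝ (Icc a b) φ := by
    refine StrictMonoOn.strictConvexOn_of_deriv (convex_Icc a b)
      (fun t ht => (hφ t ht).continuousAt.continuousWithinAt) ?_
    rw [interior_Icc]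
    exact hmono.congr fun t ht => ((hφ t (Ioo_subset_Icc_self ht)).deriv).symm
  exact hconv.lt_slope_of_hasDerivAt (left_mem_Icc.2 hab.le) (right_mem_Icc.2 hab.le) hab
    (hφ a (left_mem_Icc.2 hab.le))

section Legendre

variable {V : Type*} [NormedAddCommGroup V] [NormedSpace ℝ V] {F : V → ℝ}

theorem legendre_of_ne_zero {u : V} (hu : u ≠ 0) :
    legendre F u = (1 / 2 : ℝ) • fderiv ℝ (fun v => F v ^ 2) u :=
  if_neg hu

theorem contDiffOn_legendre {n : WithTop ℕ∞} (hsm : ContDiffOn ℝ (n + 1) F {0}ᶜ) :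
    ContDiffOn ℝ n (legendre F) {0}ᶜ :=
  (((hsm.pow 2).fderiv_of_isOpen isOpen_compl_singleton le_rfl).const_smul (1 / 2 : ℝ)).congr
    fun _ hv => legendre_of_ne_zero hv

end Legendre

namespace IsMinkowskiNorm

variable {V : Type*} [NormedAddCommGroup V] [NormedSpace ℝ V] {F : V → ℝ}

theorem contDiffOn_sq (hF : IsMinkowskiNorm F) :
    ContDiffOn ℝ 2 (fun v => F v ^ 2) {0}ᶜ :=
  hF.smooth.pow 2

theorem differentiableAt_sq (hF : IsMinkowskiNorm F) {v : V} (hv : v ≠ 0) :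
    DifferentiableAt ℝ (fun v => F v ^ 2) v :=
  (hF.contDiffOn_sq.contDiffAt (isOpen_compl_singleton.mem_nhds hv)).differentiableAt
    (by norm_num)

theorem differentiableAt_fderiv_sq (hF : IsMinkowskiNorm F) {v : V} (hv : v ≠ 0) :
    DifferentiableAt ℝ (fderiv ℝ fun v => F v ^ 2) v :=
  ((hF.contDiffOn_sq.fderiv_of_isOpen isOpen_compl_singleton (m := 1) (by norm_num)).contDiffAt
    (isOpen_compl_singleton.mem_nhds hv)).differentiableAt (by norm_num)

theorem fderiv_sq_apply_self (hF : IsMinkowskiNorm F) {v : V} (hv : v ≠ 0) :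
    fderiv ℝ (fun v => F v ^ 2) v v = 2 * F v ^ 2 := by
  have hline : HasDerivAt (fun t : ℝ => F (t • v) ^ 2) (fderiv ℝ (fun v => F v ^ 2) v v) 1 := by
    have hv' : HasFDerivAt (fun v => F v ^ 2) (fderiv ℝ (fun v => F v ^ 2) v) ((1 : ℝ) • v) := by
      rw [one_smul]; exact (hF.differentiableAt_sq hv).hasFDerivAt
    have hray : HasDerivAt (fun t : ℝ => t • v) v 1 := by
      simpa using (hasDerivAt_id (1 : ℝ)).smul_const v
    exact hv'.comp_hasDerivAt 1 hray
  have hhom : (fun t : ℝ => t ^ 2 * F v ^ 2) =ᶠ[𝓝 1] fun t => F (t • v) ^ 2 := by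
    filter_upwards [Ioi_mem_nhds one_pos] with t ht
    rw [hF.homog t ht v]; ring
  refine hline.unique ((hhom.hasDerivAt_iff).1 ?_)
  simpa using (hasDerivAt_pow 2 (1 : ℝ)).mul_const (F v ^ 2)

theorem sq_add_fderiv_sq_lt_sq (hF : IsMinkowskiNorm F) {u w : V} (hw : w ≠ u)
    (hseg : ∀ t ∈ Icc (0 : ℝ) 1, u + t • (w - u) ≠ 0) :
    F u ^ 2 + fderiv ℝ (fun v => F v ^ 2) u (w - u) < F w ^ 2 := by
  set d := w - u
  have hline : ∀ t : ℝ, HasDerivAt (fun t : ℝ => u + t • d) d t := fun t => by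
    simpa using ((hasDerivAt_id t).smul_const d).const_add u
  have hφ : ∀ t ∈ Icc (0 : ℝ) 1, HasDerivAt (fun t => F (u + t • d) ^ 2)
      (fderiv ℝ (fun v => F v ^ 2) (u + t • d) d) t := fun t ht => by
    exact (hF.differentiableAt_sq (hseg t ht)).hasFDerivAt.comp_hasDerivAt t (hline t)
  have hφ' : ∀ t ∈ Ioo (0 : ℝ) 1, HasDerivAt (fun t => fderiv ℝ (fun v => F v ^ 2) (u + t • d) d)
      (fderiv ℝ (fderiv ℝ fun v => F v ^ 2) (u + t • d) d d) t := fun t ht =>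
    (ContinuousLinearMap.apply ℝ ℝ d).hasFDerivAt.comp_hasDerivAt t
      ((hF.differentiableAt_fderiv_sq (hseg t (Ioo_subset_Icc_self ht))).hasFDerivAt.comp_hasDerivAt
        t (hline t))
  have hφ'' : ∀ t ∈ Ioo (0 : ℝ) 1,
      0 < fderiv ℝ (fderiv ℝ fun v => F v ^ 2) (u + t • d) d d := fun t ht => by
    have := hF.posdef _ (hseg t (Ioo_subset_Icc_self ht)) d (sub_ne_zero.2 hw)
    rw [fundTensor] at this
    linarith
  have := lt_slope_of_hasDerivAt_of_deriv2_pos one_pos hφ hφ' hφ''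
  simp only [slope, zero_smul, add_zero, one_smul, d, add_sub_cancel, sub_zero, inv_one,
    smul_eq_mul, one_mul, vsub_eq_sub] at this
  linarith

theorem legendre_apply_self (hF : IsMinkowskiNorm F) {u : V} (hu : u ≠ 0) :
    legendre F u u = F u ^ 2 := by
  rw [legendre_of_ne_zero hu, smul_apply, hF.fderiv_sq_apply_self hu,
    smul_eq_mul]
  ring

theorem two_mul_legendre_apply_lt (hF : IsMinkowskiNorm F) {u w : V} (hu : u ≠ 0) (hw : w ≠ u) :
    2 * legendre F u w < F u ^ 2 + F w ^ 2 := by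
  by_cases hseg : ∀ t ∈ Icc (0 : ℝ) 1, u + t • (w - u) ≠ 0
  · have := hF.sq_add_fderiv_sq_lt_sq hw hseg
    rw [map_sub, hF.fderiv_sq_apply_self hu] at this
    rw [legendre_of_ne_zero hu, smul_apply, smul_eq_mul]
    linarith
  · -- then `w` is a nonpositive multiple of `u`, so `legendre F u w ≤ 0`
    simp only [not_forall, not_not] at hseg
    obtain ⟨t, ⟨ht₀, ht₁⟩, hzero⟩ := hseg
    have hcomb := congrArg (legendre F u) hzero
    rw [map_add, map_smul, map_sub, hF.legendre_apply_self hu, (legendre F u).map_zero,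
      smul_eq_mul] at hcomb
    have ht : t ≠ 0 := by rintro rfl; simp [hu] at hzero
    have hFu := hF.pos u hu
    nlinarith [lt_of_le_of_ne ht₀ (Ne.symm ht), sq_nonneg (F w)]

theorem legendre_apply_le (hF : IsMinkowskiNorm F) {u v : V} (hu : u ≠ 0) (hv : F v = 1) :
    legendre F u v ≤ F u := by
  have hFu := hF.pos u hu
  have hscale : legendre F u (F u • v) = F u * legendre F u v := by
    rw [map_smul, smul_eq_mul]
  refine le_of_mul_le_mul_left ?_ hFu
  by_cases h : F u • v = u
  · rw [← hscale, h, hF.legendre_apply_self hu, sq]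
  · have := hF.two_mul_legendre_apply_lt hu h
    rw [hscale, hF.homog _ hFu, hv] at this
    linarith

theorem isGreatest_legendre_image (hF : IsMinkowskiNorm F) {u : V} (hu : u ≠ 0) :
    IsGreatest ((fun v => legendre F u v) '' {v | F v = 1}) (F u) := by
  have hFu := hF.pos u hu
  refine ⟨⟨(F u)⁻¹ • u, ?_, ?_⟩, ?_⟩
  · show F ((F u)⁻¹ • u) = 1
    rw [hF.homog _ (inv_pos.2 hFu), inv_mul_cancel₀ hFu.ne']
  · simp only [map_smul, hF.legendre_apply_self hu, smul_eq_mul]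
    field_simp
  · rintro _ ⟨v, hv, rfl⟩
    exact hF.legendre_apply_le hu hv

theorem dualNorm_legendre (hF : IsMinkowskiNorm F) {u : V} (hu : u ≠ 0) :
    dualNorm F (legendre F u) = F u :=
  (hF.isGreatest_legendre_image hu).csSup_eq

theorem exists_pos_mul_norm_le [FiniteDimensional ℝ V] [Nontrivial V] (hF : IsMinkowskiNorm F) :
    ∃ c > 0, ∀ v, c * ‖v‖ ≤ F v := by
  obtain ⟨z, hz, hmin⟩ := (isCompact_sphere (0 : V) 1).exists_isMinOn
    (NormedSpace.sphere_nonempty.2 zero_le_one) hF.continuous.continuousOn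
  have hz0 : z ≠ 0 := ne_zero_of_mem_unit_sphere ⟨z, hz⟩
  refine ⟨F z, hF.pos z hz0, fun v => ?_⟩
  rcases eq_or_ne v 0 with rfl | hv
  · simp [hF.map_zero]
  have hnv : 0 < ‖v‖ := norm_pos_iff.2 hv
  have hunit : ‖v‖⁻¹ • v ∈ Metric.sphere (0 : V) 1 := by
    rw [mem_sphere_zero_iff_norm, norm_smul, norm_inv, norm_norm, inv_mul_cancel₀ hnv.ne']
  calc F z * ‖v‖ ≤ F (‖v‖⁻¹ • v) * ‖v‖ := mul_le_mul_of_nonneg_right (hmin hunit) hnv.le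
    _ = F v := by
      rw [hF.homog _ (inv_pos.2 hnv), mul_comm, ← mul_assoc, mul_inv_cancel₀ hnv.ne', one_mul]

theorem exists_legendre_eq [FiniteDimensional ℝ V] (hF : IsMinkowskiNorm F) {ω : V →L[ℝ] ℝ}
    (hω : ω ≠ 0) : ∃ u, u ≠ 0 ∧ legendre F u = ω := by
  obtain ⟨v₀, hv₀⟩ : ∃ v, 0 < ω v := by
    obtain ⟨v, hv⟩ := DFunLike.ne_iff.1 hω
    rcases (ne_of_apply_ne id hv).lt_or_gt with h | h
    · exact ⟨-v, by simpa using h⟩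
    · exact ⟨v, h⟩
  have : Nontrivial V := ⟨v₀, 0, by rintro rfl; simp at hv₀⟩
  obtain ⟨c, hc, hcF⟩ := hF.exists_pos_mul_norm_le
  -- `u` will be a minimiser of `G`, a critical point where `D(F²) u = 2 ω`
  set G : V → ℝ := fun v => F v ^ 2 - 2 * ω v
  have hG0 : G 0 = 0 := by simp [G, hF.map_zero]
  have hcoercive : ∀ᶠ v in cocompact V, G 0 ≤ G v := by
    filter_upwards [tendsto_norm_cocompact_atTop.eventually
      (eventually_ge_atTop (2 * ‖ω‖ / c ^ 2))] with v hv
    rw [div_le_iff₀ (by positivity)] at hv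
    have hω_le : ω v ≤ ‖ω‖ * ‖v‖ := (le_abs_self _).trans (ω.le_opNorm v)
    have hF_ge : c * ‖v‖ ≤ F v := hcF v
    have hc_nonneg : 0 ≤ c * ‖v‖ := by positivity
    have hsq : (c * ‖v‖) ^ 2 ≤ F v ^ 2 := pow_le_pow_left₀ hc_nonneg hF_ge 2
    have hlin : 2 * ‖ω‖ * ‖v‖ ≤ ‖v‖ * c ^ 2 * ‖v‖ :=
      mul_le_mul_of_nonneg_right hv (norm_nonneg v)
    simp only [hG0, G]
    nlinarith
  have hGcont : Continuous G := (hF.continuous.pow 2).sub (continuous_const.mul ω.continuous)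
  obtain ⟨u, hmin⟩ := hGcont.exists_forall_le' 0 hcoercive
  have hGu : G u < 0 := by
    have hFv₀ := hF.pos v₀ (by rintro rfl; simp at hv₀)
    set s := ω v₀ / F v₀ ^ 2
    have hs : 0 < s := by positivity
    have hGs : G (s • v₀) = -(s * ω v₀) := by
      simp only [G, hF.homog s hs, map_smul, smul_eq_mul, s]
      field_simp
      ring
    linarith [hmin (s • v₀), mul_pos hs hv₀]
  have hu : u ≠ 0 := by rintro rfl; linarith
  have hderiv : HasFDerivAt G (fderiv ℝ (fun v => F v ^ 2) u - (2 : ℝ) • ω) u :=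
    (hF.differentiableAt_sq hu).hasFDerivAt.sub (ω.hasFDerivAt.const_mul 2)
  have hloc : IsLocalMin G u := Eventually.of_forall hmin
  have hcrit := hloc.hasFDerivAt_eq_zero hderiv
  refine ⟨u, hu, ?_⟩
  rw [legendre_of_ne_zero hu, sub_eq_zero.1 hcrit, smul_smul]
  norm_num

theorem hasFDerivAt_legendre (hF : IsMinkowskiNorm F) {u : V} (hu : u ≠ 0) :
    HasFDerivAt (legendre F) ((1 / 2 : ℝ) • fderiv ℝ (fderiv ℝ fun v => F v ^ 2) u) u := by
  refine ((hF.differentiableAt_fderiv_sq hu).hasFDerivAt.const_smul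
    (1 / 2 : ℝ)).congr_of_eventuallyEq ?_
  filter_upwards [isOpen_compl_singleton.mem_nhds hu] with v hv
  exact legendre_of_ne_zero hv

theorem exists_hasFDerivAt_legendre_equiv [FiniteDimensional ℝ V] (hF : IsMinkowskiNorm F)
    {u : V} (hu : u ≠ 0) :
    ∃ e : V ≃L[ℝ] (V →L[ℝ] ℝ), HasFDerivAt (legendre F) (e : V →L[ℝ] V →L[ℝ] ℝ) u := by
  set A : V →L[ℝ] V →L[ℝ] ℝ := (1 / 2 : ℝ) • fderiv ℝ (fderiv ℝ fun v => F v ^ 2) u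
  have hA : ∀ w, A w w = fundTensor F u w w := fun w => by simp [A, fundTensor]
  have hinj : Function.Injective A := by
    refine (injective_iff_map_eq_zero A).2 fun w hw => ?_
    by_contra hw0
    have := hF.posdef u hu w hw0
    rw [← hA, hw, zero_apply] at this
    exact this.false
  have hdim : Module.finrank ℝ V = Module.finrank ℝ (V →L[ℝ] ℝ) := by
    rw [← (LinearMap.toContinuousLinearMap : (V →ₗ[ℝ] ℝ) ≃ₗ[ℝ] (V →L[ℝ] ℝ)).finrank_eq,
      Subspace.dual_finrank_eq]
  refine ⟨((A : V →ₗ[ℝ] V →L[ℝ] ℝ).linearEquivOfInjective hinj hdim).toContinuousLinearEquiv, ?_⟩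
  convert hF.hasFDerivAt_legendre hu
  ext1 w
  rfl

theorem contDiffOn_dualNorm [FiniteDimensional ℝ V] (hF : IsMinkowskiNorm F) {n : WithTop ℕ∞}
    (hn : n ≠ 0) (hsm : ContDiffOn ℝ (n + 1) F {0}ᶜ) :
    ContDiffOn ℝ n (dualNorm F) {0}ᶜ := by
  rintro _ hω
  obtain ⟨u, hu, rfl⟩ := hF.exists_legendre_eq hω
  obtain ⟨e, he⟩ := hF.exists_hasFDerivAt_legendre_equiv hu
  have hℓ : ContDiffAt ℝ n (legendre F) u :=
    (contDiffOn_legendre hsm).contDiffAt (isOpen_compl_singleton.mem_nhds hu)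
  set g := hℓ.localInverse he hn
  have hg : ContDiffAt ℝ n g (legendre F u) := hℓ.to_localInverse he hn
  have hgu : g (legendre F u) = u := hℓ.localInverse_apply_image he hn
  have hFg : ContDiffAt ℝ n F (g (legendre F u)) := by
    rw [hgu]; exact hsm.of_succ.contDiffAt (isOpen_compl_singleton.mem_nhds hu)
  have hright : ∀ᶠ ω in 𝓝 (legendre F u), legendre F (g ω) = ω :=
    (hℓ.hasStrictFDerivAt' he hn).eventually_right_inverse
  have hne : ∀ᶠ ω in 𝓝 (legendre F u), g ω ≠ 0 :=
    hg.continuousAt.eventually_ne (by rwa [hgu])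
  refine ((hFg.comp _ hg).congr_of_eventuallyEq ?_).contDiffWithinAt
  filter_upwards [hright, hne] with ω hω hgω
  calc dualNorm F ω = dualNorm F (legendre F (g ω)) := by rw [hω]
    _ = F (g ω) := hF.dualNorm_legendre hgω

end IsMinkowskiNorm

theorem dualNorm_contDiffOn_general
    {m : ℕ} (k : ℕ) (hk : 2 ≤ k)
    (F : EuclideanSpace ℝ (Fin m) → ℝ) (hF : IsMinkowskiNorm F)
    (hsm : ContDiffOn ℝ (k + 1 : ℕ) F ({0}ᶜ : Set (EuclideanSpace ℝ (Fin m)))) :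
    ContDiffOn ℝ (k : ℕ) (dualNorm F)
      ({0}ᶜ : Set (EuclideanSpace ℝ (Fin m) →L[ℝ] ℝ)) :=
  hF.contDiffOn_dualNorm (by exact_mod_cast (by omega : k ≠ 0)) (by exact_mod_cast hsm)

/-- for a `C^{k+1}` (`k ≥ 2`) strongly convex Minkowski norm `F`, the dual
co-Finsler norm `F^*` is of class `C^k` away from the origin of the dual space. -/
theorem dualNorm_contDiffOn
    {m : ℕ} (hm : 2 ≤ m) (k : ℕ) (hk : 2 ≤ k)
    (F : EuclideanSpace ℝ (Fin m) → ℝ) (hF : IsMinkowskiNorm F)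
    (hsm : ContDiffOn ℝ (k + 1 : ℕ) F ({0}ᶜ : Set (EuclideanSpace ℝ (Fin m)))) :
    ContDiffOn ℝ (k : ℕ) (dualNorm F)
      ({0}ᶜ : Set (EuclideanSpace ℝ (Fin m) →L[ℝ] ℝ)) :=
  dualNorm_contDiffOn_general k hk F hF hsm
end
end
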